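/- Let m, n ∈ ℕ, α, β > 0, σ > 1. For every x ∈ ℝ₊^m, the weight function ϖ(σ, x) := ‖x‖_α^{σ} ∫_{ℝ₊^n} (coth(‖x‖_α/‖y‖_β) − 1) ‖y‖_β^{−n−σ} dy equals the constant K₁(σ) := (Γ(1/β)^n/(β^{n−1} Γ(n/β))) · (Γ(σ)/2^{σ−1}) · ζ(σ); in particular it is independent of x. -/

import Mathlib

open MeasureTheory Real Set

noncomputable def cothR (v : ℝ) : ℝ := (Real.exp v + Real.exp (-v)) / (Real.exp v - Real.exp (-v))
noncomputable def zetaR (σ : ℝ) : ℝ := ∑' k : ℕ+, (k : ℝ) ^ (-σ)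
noncomputable def pnorm {s : ℕ} (γ : ℝ) (x : Fin s → ℝ) : ℝ := (∑ i, |x i| ^ γ) ^ (1 / γ)

/-!
On the orthant, `pnorm β` is positively homogeneous, so `{y | pnorm β y ≤ r}` has volume `r ^ n * V`
and the push-forward of Lebesgue measure under `pnorm β` has density `n * V * r ^ (n - 1)` on
`(0, ∞)`; this reduces the integral over the orthant to a radial one. Testing the same formula
against `exp (-pnorm β y ^ β) = ∏ i, exp (-y i ^ β)` identifies
`n * V = Γ(1/β)^n / (β^(n-1) Γ(n/β))`.

For the radial integral, `coth v - 1 = 2 ∑_{k ≥ 1} exp (-2 k v)`; after `r ↦ 1/r` each term of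
`∫₀^∞ r^(-1-σ) (coth (t/r) - 1) dr` is a Gamma integral equal to `2 Γ(σ) (2 k t)^(-σ)`, and the
sum over `k` produces `ζ(σ)`. The resulting factor `t^(-σ)` cancels `‖x‖_α^σ`.
-/

open scoped Pointwise

theorem MeasureTheory.Measure.ext_of_Iic' {α : Type*} [TopologicalSpace α] {m : MeasurableSpace α}
    [SecondCountableTopology α] [LinearOrder α] [OrderTopology α] [BorelSpace α] [NoMinOrder α]
    (μ ν : Measure α) (hμ : ∀ a, μ (Iic a) ≠ ⊤) (h : ∀ a, μ (Iic a) = ν (Iic a)) : μ = ν := by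
  refine Measure.ext_of_Ioc' μ ν (fun a b _ => ?_) (fun a b hab => ?_)
  · exact ne_top_of_le_ne_top (hμ b) (measure_mono Ioc_subset_Iic_self)
  · have hsub : Iic a ⊆ Iic b := Iic_subset_Iic.2 hab.le
    rw [← Iic_sdiff_Iic, measure_sdiff hsub measurableSet_Iic.nullMeasurableSet (hμ a),
      measure_sdiff hsub measurableSet_Iic.nullMeasurableSet (h a ▸ hμ a), h, h]

lemma setLIntegral_Ioc_zero_ofReal_mul_rpow {p : ℝ} (hp : 0 < p) {c a : ℝ} (hc : 0 ≤ c)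
    (ha : 0 ≤ a) :
    ∫⁻ r in Ioc 0 a, ENNReal.ofReal (p * c * r ^ (p - 1)) = ENNReal.ofReal (a ^ p * c) := by
  have hint : IntegrableOn (fun r : ℝ => p * c * r ^ (p - 1)) (Ioc 0 a) :=
    (intervalIntegral.intervalIntegrable_rpow' (by linarith)).1.const_mul _
  rw [← ofReal_integral_eq_lintegral_ofReal hint, ← intervalIntegral.integral_of_le ha,
    intervalIntegral.integral_const_mul, integral_rpow (Or.inl (by linarith)), sub_add_cancel,
    zero_rpow hp.ne', sub_zero]
  · congr 1; field_simp
  · filter_upwards [ae_restrict_mem measurableSet_Ioc] with r hr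
    exact mul_nonneg (mul_nonneg hp.le hc) (rpow_nonneg hr.1.le _)

def posOrthant (n : ℕ) : Set (Fin n → ℝ) := univ.pi fun _ => Ioi 0

noncomputable def orthantBallVolume (n : ℕ) (β : ℝ) : ℝ :=
  volume.real (posOrthant n ∩ {y | pnorm β y ≤ 1})

section pnorm

variable {n : ℕ} {β : ℝ}

lemma pnorm_nonneg (β : ℝ) (y : Fin n → ℝ) : 0 ≤ pnorm β y := by
  unfold pnorm; positivity

lemma pnorm_rpow (hβ : β ≠ 0) (y : Fin n → ℝ) : pnorm β y ^ β = ∑ i, |y i| ^ β := by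
  rw [pnorm, ← rpow_mul (by positivity), one_div_mul_cancel hβ, rpow_one]

lemma pnorm_pos {y : Fin n → ℝ} (hy : y ≠ 0) : 0 < pnorm β y := by
  obtain ⟨i, hi⟩ := Function.ne_iff.1 hy
  refine rpow_pos_of_pos (lt_of_lt_of_le ?_ (Finset.single_le_sum
    (fun j _ => rpow_nonneg (abs_nonneg (y j)) β) (Finset.mem_univ i))) _
  exact rpow_pos_of_pos (abs_pos.2 hi) β

lemma pnorm_smul (hβ : 0 < β) {r : ℝ} (hr : 0 ≤ r) (y : Fin n → ℝ) :
    pnorm β (r • y) = r * pnorm β y := by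
  simp only [pnorm, Pi.smul_apply, smul_eq_mul, abs_mul, abs_of_nonneg hr,
    mul_rpow hr (abs_nonneg _), ← Finset.mul_sum]
  rw [mul_rpow (by positivity) (by positivity), ← rpow_mul hr, mul_one_div_cancel hβ.ne', rpow_one]

lemma measurable_pnorm (β : ℝ) : Measurable (pnorm (s := n) β) := by
  unfold pnorm; fun_prop

lemma abs_le_one_of_pnorm_le_one (hβ : 0 < β) {y : Fin n → ℝ} (hy : pnorm β y ≤ 1) (i : Fin n) :
    |y i| ≤ 1 := by
  have hsum : ∑ j, |y j| ^ β ≤ 1 := by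
    rw [← pnorm_rpow hβ.ne']
    exact rpow_le_one (pnorm_nonneg β y) hy hβ.le
  have hi : |y i| ^ β ≤ 1 := le_trans (Finset.single_le_sum
    (fun j _ => rpow_nonneg (abs_nonneg (y j)) β) (Finset.mem_univ i)) hsum
  by_contra! h
  exact (one_lt_rpow h hβ).not_ge hi

end pnorm

section orthant

variable {n : ℕ} {β : ℝ}

lemma orthantBallVolume_nonneg : 0 ≤ orthantBallVolume n β := measureReal_nonneg

lemma measurableSet_posOrthant : MeasurableSet (posOrthant n) :=
  MeasurableSet.univ_pi fun _ => measurableSet_Ioi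

lemma mem_posOrthant {y : Fin n → ℝ} : y ∈ posOrthant n ↔ ∀ i, 0 < y i := by
  simp [posOrthant]

lemma posOrthant_inter_pnorm_le_eq_empty (hn : 0 < n) {r : ℝ} (hr : r ≤ 0) :
    posOrthant n ∩ {y | pnorm β y ≤ r} = ∅ := by
  refine eq_empty_of_forall_notMem fun y ⟨hy, hyr⟩ => ?_
  have hy0 : y ≠ 0 := fun h => by simpa [h] using mem_posOrthant.1 hy ⟨0, hn⟩
  exact (pnorm_pos hy0).not_ge (le_trans hyr hr)

lemma smul_posOrthant_inter_pnorm_le_one (hβ : 0 < β) {r : ℝ} (hr : 0 < r) :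
    r • (posOrthant n ∩ {y | pnorm β y ≤ 1}) = posOrthant n ∩ {y | pnorm β y ≤ r} := by
  ext y
  rw [mem_smul_set_iff_inv_smul_mem₀ hr.ne']
  simp only [mem_inter_iff, mem_posOrthant, mem_ofPred_eq, Pi.smul_apply, smul_eq_mul,
    pnorm_smul hβ (inv_nonneg.2 hr.le), inv_mul_le_iff₀ hr, mul_one,
    mul_pos_iff_of_pos_left (inv_pos.2 hr)]

lemma volume_posOrthant_inter_pnorm_le_one_ne_top (hβ : 0 < β) :
    volume (posOrthant n ∩ {y | pnorm β y ≤ 1}) ≠ ⊤ := by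
  refine ne_top_of_le_ne_top (measure_closedBall_lt_top (x := 0) (r := 1)).ne (measure_mono ?_)
  rintro y ⟨-, hy⟩
  rw [mem_closedBall_zero_iff, pi_norm_le_iff_of_nonneg zero_le_one]
  exact fun i => abs_le_one_of_pnorm_le_one hβ hy i

lemma volume_posOrthant_inter_pnorm_le (hβ : 0 < β) {r : ℝ} (hr : 0 < r) :
    volume (posOrthant n ∩ {y | pnorm β y ≤ r}) =
      ENNReal.ofReal (r ^ n * orthantBallVolume n β) := by
  rw [← smul_posOrthant_inter_pnorm_le_one hβ hr, Measure.addHaar_smul, Module.finrank_fin_fun,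
    abs_of_pos (pow_pos hr n), ENNReal.ofReal_mul (by positivity), orthantBallVolume,
    ofReal_measureReal (volume_posOrthant_inter_pnorm_le_one_ne_top hβ)]

end orthant

section polar

variable {n : ℕ} {β : ℝ}

lemma map_pnorm_restrict_posOrthant (hβ : 0 < β) (hn : 0 < n) :
    (volume.restrict (posOrthant n)).map (pnorm β) =
      (volume.restrict (Ioi 0)).withDensity
        fun r => ENNReal.ofReal (n * orthantBallVolume n β * r ^ ((n : ℝ) - 1)) := by
  set V := orthantBallVolume n β
  have hV : 0 ≤ V := orthantBallVolume_nonneg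
  have hcdf : ∀ a : ℝ, (volume.restrict (posOrthant n)).map (pnorm β) (Iic a) =
      ENNReal.ofReal (max a 0 ^ n * V) := by
    intro a
    rw [Measure.map_apply (measurable_pnorm β) measurableSet_Iic,
      Measure.restrict_apply' measurableSet_posOrthant, inter_comm]
    rcases le_or_gt a 0 with ha | ha
    · rw [max_eq_right ha, zero_pow hn.ne', zero_mul, ENNReal.ofReal_zero]
      exact (congrArg volume (posOrthant_inter_pnorm_le_eq_empty hn ha)).trans measure_empty
    · rw [max_eq_left ha.le]
      exact volume_posOrthant_inter_pnorm_le hβ ha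
  have hdensity : ∀ a : ℝ, ((volume.restrict (Ioi 0)).withDensity
      fun r => ENNReal.ofReal (n * V * r ^ ((n : ℝ) - 1))) (Iic a) =
      ENNReal.ofReal (max a 0 ^ n * V) := by
    intro a
    rw [withDensity_apply _ measurableSet_Iic, Measure.restrict_restrict measurableSet_Iic,
      Iic_inter_Ioi, ← rpow_natCast]
    rcases le_or_gt a 0 with ha | ha
    · rw [Ioc_eq_empty ha.not_gt, Measure.restrict_empty, lintegral_zero_measure, max_eq_right ha,
        zero_rpow (by positivity), zero_mul, ENNReal.ofReal_zero]
    · rw [max_eq_left ha.le]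
      exact setLIntegral_Ioc_zero_ofReal_mul_rpow (by positivity) hV ha.le
  exact Measure.ext_of_Iic' _ _ (fun a => hcdf a ▸ ENNReal.ofReal_ne_top)
    (fun a => (hcdf a).trans (hdensity a).symm)

theorem integral_posOrthant_comp_pnorm {E : Type*} [NormedAddCommGroup E] [NormedSpace ℝ E]
    (hβ : 0 < β) (hn : 0 < n) {f : ℝ → E} (hf : StronglyMeasurable f) :
    ∫ y in posOrthant n, f (pnorm β y) =
      ∫ r in Ioi 0, (n * orthantBallVolume n β * r ^ ((n : ℝ) - 1)) • f r := by
  rw [← integral_map (measurable_pnorm β).aemeasurable hf.aestronglyMeasurable,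
    map_pnorm_restrict_posOrthant hβ hn, integral_withDensity_eq_integral_toReal_smul
      (by fun_prop) (ae_of_all _ fun _ => ENNReal.ofReal_lt_top)]
  refine setIntegral_congr_fun measurableSet_Ioi fun r hr => ?_
  have hV := orthantBallVolume_nonneg (n := n) (β := β)
  rw [ENNReal.toReal_ofReal (mul_nonneg (by positivity) (rpow_nonneg (le_of_lt hr) _))]

end polar

section gammaConstant

variable {n : ℕ} {β : ℝ}

lemma integral_posOrthant_prod (f : ℝ → ℝ) :
    ∫ y in posOrthant n, ∏ i, f (y i) = (∫ t in Ioi 0, f t) ^ n := by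
  rw [posOrthant, volume_pi, Measure.restrict_pi_pi, integral_fintype_prod_eq_pow, Fintype.card_fin]

lemma natCast_mul_orthantBallVolume (hβ : 0 < β) (hn : 0 < n) :
    n * orthantBallVolume n β = Gamma (1 / β) ^ n / (β ^ (n - 1) * Gamma (n / β)) := by
  set K := n * orthantBallVolume n β
  have hpolar := integral_posOrthant_comp_pnorm hβ hn (f := fun r => exp (-|r| ^ β))
    (by fun_prop)
  have hlhs : ∫ y in posOrthant n, exp (-|pnorm β y| ^ β) = (Gamma (1 / β) / β) ^ n := by
    have hprod (y : Fin n → ℝ) : exp (-|pnorm β y| ^ β) = ∏ i, exp (-|y i| ^ β) := by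
      rw [abs_of_nonneg (pnorm_nonneg β y), pnorm_rpow hβ.ne', ← Finset.sum_neg_distrib, exp_sum]
    simp_rw [hprod]
    rw [integral_posOrthant_prod fun t => exp (-|t| ^ β),
      setIntegral_congr_fun measurableSet_Ioi fun t ht => by rw [abs_of_pos ht],
      integral_exp_neg_rpow hβ, Gamma_add_one (by positivity), one_div_mul_eq_div]
  have hrhs :
      ∫ r in Ioi 0, (K * r ^ ((n : ℝ) - 1)) • exp (-|r| ^ β) = K * (Gamma (n / β) / β) := by
    simp_rw [smul_eq_mul, mul_assoc]
    rw [integral_const_mul,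
      setIntegral_congr_fun measurableSet_Ioi fun r hr => by rw [abs_of_pos hr],
      integral_rpow_mul_exp_neg_rpow hβ (by simp [hn]), sub_add_cancel, one_div_mul_eq_div]
  rw [hlhs, hrhs] at hpolar
  have hΓ : 0 < Gamma (n / β) := Gamma_pos_of_pos (by positivity)
  have hβn : β ^ n = β ^ (n - 1) * β := by rw [← pow_succ, Nat.sub_add_cancel hn]
  rw [eq_div_iff (by positivity)]
  rw [div_pow, div_eq_iff (by positivity), hβn] at hpolar
  rw [hpolar]
  field_simp

end gammaConstant

section radial

@[fun_prop]
lemma measurable_cothR : Measurable cothR := by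
  unfold cothR; fun_prop

lemma cothR_eq_div {v : ℝ} : cothR v = (1 + exp (-(2 * v))) / (1 - exp (-(2 * v))) := by
  have hexp : exp (-(2 * v)) = exp (-v) * exp (-v) := by rw [← exp_add]; ring_nf
  rw [cothR, hexp, ← mul_div_mul_left _ _ (exp_pos (-v)).ne']
  congr 1 <;> [rw [mul_add]; rw [mul_sub]] <;> rw [← exp_add, neg_add_cancel, exp_zero]

lemma hasSum_coth_sub_one {v : ℝ} (hv : 0 < v) :
    HasSum (fun k : ℕ+ => 2 * exp (-(2 * k * v))) (cothR v - 1) := by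
  have hq1 : exp (-(2 * v)) < 1 := exp_lt_one_iff.2 (by linarith)
  have hgeom (k : ℕ) : 2 * exp (-(2 * k * v)) = 2 * exp (-(2 * v)) ^ k := by
    rw [← exp_nat_mul]; ring_nf
  have hval : cothR v - 1 + 2 * exp (-(2 * (0 : ℕ) * v)) = 2 * (1 - exp (-(2 * v)))⁻¹ := by
    rw [cothR_eq_div, Nat.cast_zero, mul_zero, zero_mul, neg_zero, exp_zero]
    field_simp [(sub_pos.2 hq1).ne']
    ring
  rw [hasSum_pnat_iff (f := fun k : ℕ => 2 * exp (-(2 * k * v))), hval, funext hgeom]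
  exact (hasSum_geometric_of_lt_one (exp_pos _).le hq1).mul_left 2

/- The integrand of `integral_comp_rpow_Ioi` with `p = -1`: the substitution `r ↦ r⁻¹` turns
`∫ r ^ (-1 - σ) * exp (-(c / r))` into the Gamma integral `∫ y ^ (σ - 1) * exp (-c * y)`. -/
lemma rpow_mul_exp_neg_div_eq {σ c x : ℝ} (hx : 0 < x) :
    x ^ (-1 - σ) * exp (-(c / x)) = (|(-1 : ℝ)| * x ^ ((-1 : ℝ) - 1)) •
      ((x ^ (-1 : ℝ)) ^ (σ - 1) * exp (-c * (x ^ (-1 : ℝ)) ^ (1 : ℝ))) := by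
  rw [smul_eq_mul, abs_neg, abs_one, one_mul, rpow_one, ← rpow_mul hx.le, ← mul_assoc,
    ← rpow_add hx, rpow_neg_one, neg_mul, ← div_eq_mul_inv]
  ring_nf

lemma integrableOn_rpow_mul_exp_neg_div {σ c : ℝ} (hσ : 0 < σ) (hc : 0 < c) :
    IntegrableOn (fun r => r ^ (-1 - σ) * exp (-(c / r))) (Ioi 0) := by
  refine IntegrableOn.congr_fun ?_ (fun x hx => (rpow_mul_exp_neg_div_eq hx).symm)
    measurableSet_Ioi
  exact (integrableOn_Ioi_comp_rpow_iff _ (by norm_num)).2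
    (integrableOn_rpow_mul_exp_neg_mul_rpow (by linarith) one_pos hc)

lemma integral_rpow_mul_exp_neg_div {σ c : ℝ} (hσ : 0 < σ) (hc : 0 < c) :
    ∫ r in Ioi 0, r ^ (-1 - σ) * exp (-(c / r)) = Gamma σ * c ^ (-σ) := by
  rw [setIntegral_congr_fun measurableSet_Ioi fun x hx => rpow_mul_exp_neg_div_eq hx,
    integral_comp_rpow_Ioi (fun y => y ^ (σ - 1) * exp (-c * y ^ (1 : ℝ))) (by norm_num),
    integral_rpow_mul_exp_neg_mul_rpow one_pos (by linarith) hc]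
  simp only [sub_add_cancel, div_one, mul_one]
  ring

theorem integral_rpow_mul_coth_sub_one {σ t : ℝ} (hσ : 1 < σ) (ht : 0 < t) :
    ∫ r in Ioi 0, r ^ (-1 - σ) * (cothR (t / r) - 1) =
      t ^ (-σ) * (Gamma σ / 2 ^ (σ - 1) * zetaR σ) := by
  have hσ0 : 0 < σ := by linarith
  set F : ℕ+ → ℝ → ℝ := fun k r => r ^ (-1 - σ) * (2 * exp (-(2 * k * (t / r))))
  have hF (k : ℕ+) : EqOn (F k) (fun r => 2 * (r ^ (-1 - σ) * exp (-(2 * k * t / r)))) (Ioi 0) :=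
    fun r _ => by simp only [F, mul_div_assoc]; ring
  have hF_int (k : ℕ+) : IntegrableOn (F k) (Ioi 0) :=
    IntegrableOn.congr_fun ((integrableOn_rpow_mul_exp_neg_div hσ0 (by positivity)).const_mul 2)
      (hF k).symm measurableSet_Ioi
  have hF_integral (k : ℕ+) :
      ∫ r in Ioi 0, F k r = 2 * Gamma σ * (2 * t) ^ (-σ) * (k : ℝ) ^ (-σ) := by
    rw [setIntegral_congr_fun measurableSet_Ioi (hF k), integral_const_mul,
      integral_rpow_mul_exp_neg_div hσ0 (by positivity),
      show 2 * (k : ℝ) * t = 2 * t * k by ring, mul_rpow (by positivity) (by positivity)]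
    ring
  have hF_norm (k : ℕ+) : ∫ r in Ioi 0, ‖F k r‖ = ∫ r in Ioi 0, F k r :=
    setIntegral_congr_fun measurableSet_Ioi fun r hr =>
      norm_of_nonneg (mul_nonneg (rpow_nonneg (le_of_lt hr) _) (by positivity))
  have hζ : Summable fun k : ℕ+ => (k : ℝ) ^ (-σ) :=
    summable_pnat_iff_summable_nat.2 (summable_nat_rpow.2 (by linarith))
  have hsum := hasSum_integral_of_summable_integral_norm hF_int
    (by simp_rw [hF_norm, hF_integral]; exact hζ.mul_left _)
  have hseries :
      EqOn (fun r => ∑' k, F k r) (fun r => r ^ (-1 - σ) * (cothR (t / r) - 1)) (Ioi 0) :=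
    fun r hr => ((hasSum_coth_sub_one (div_pos ht hr)).mul_left _).tsum_eq
  rw [← setIntegral_congr_fun measurableSet_Ioi hseries, ← hsum.tsum_eq]
  simp_rw [hF_integral]
  rw [tsum_mul_left, ← zetaR, mul_rpow two_pos.le ht.le, rpow_sub two_pos, rpow_one,
    rpow_neg two_pos.le]
  field_simp

end radial

theorem stmt_9_general (m n : ℕ) (hm : 0 < m) (hn : 0 < n) (α β σ : ℝ)
    (hβ : 0 < β) (hσ : 1 < σ)
    (x : Fin m → ℝ) (hx : ∀ i, 0 < x i) :
    pnorm α x ^ σ *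
        ∫ y in {y : Fin n → ℝ | ∀ i, 0 < y i},
          (cothR (pnorm α x / pnorm β y) - 1) * pnorm β y ^ (-(n : ℝ) - σ) =
      Real.Gamma (1 / β) ^ n / (β ^ (n - 1) * Real.Gamma (n / β)) *
        (Real.Gamma σ / 2 ^ (σ - 1)) * zetaR σ := by
  set t := pnorm α x
  have ht : 0 < t := pnorm_pos fun h => (hx ⟨0, hm⟩).ne' (congrFun h _)
  have horthant : {y : Fin n → ℝ | ∀ i, 0 < y i} = posOrthant n := by
    ext; exact mem_posOrthant.symm
  have hradial : EqOn
      (fun r => (n * orthantBallVolume n β * r ^ ((n : ℝ) - 1)) •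
        ((cothR (t / r) - 1) * r ^ (-(n : ℝ) - σ)))
      (fun r => n * orthantBallVolume n β * (r ^ (-1 - σ) * (cothR (t / r) - 1))) (Ioi 0) :=
    fun r hr => by
      have hexp : r ^ ((n : ℝ) - 1) * r ^ (-(n : ℝ) - σ) = r ^ (-1 - σ) := by
        rw [← rpow_add hr]; ring_nf
      simp only [smul_eq_mul, ← hexp]
      ring
  have hf : StronglyMeasurable fun r => (cothR (t / r) - 1) * r ^ (-(n : ℝ) - σ) := by
    fun_prop
  rw [horthant, integral_posOrthant_comp_pnorm hβ hn hf,
    setIntegral_congr_fun measurableSet_Ioi hradial, integral_const_mul,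
    integral_rpow_mul_coth_sub_one hσ ht, natCast_mul_orthantBallVolume hβ hn,
    mul_left_comm, ← mul_assoc (t ^ σ), ← rpow_add ht, add_neg_cancel, rpow_zero, one_mul]
  ring

theorem stmt_9 (m n : ℕ) (hm : 0 < m) (hn : 0 < n) (α β σ : ℝ)
    (hα : 0 < α) (hβ : 0 < β) (hσ : 1 < σ)
    (x : Fin m → ℝ) (hx : ∀ i, 0 < x i) :
    pnorm α x ^ σ *
        ∫ y in {y : Fin n → ℝ | ∀ i, 0 < y i},
          (cothR (pnorm α x / pnorm β y) - 1) * pnorm β y ^ (-(n : ℝ) - σ) =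
      Real.Gamma (1 / β) ^ n / (β ^ (n - 1) * Real.Gamma (n / β)) *
        (Real.Gamma σ / 2 ^ (σ - 1)) * zetaR σ :=
  stmt_9_general m n hm hn α β σ hβ hσ x hx
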